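/- Let p be a prime and let A ⊆ F_p be a nonempty set with 0 ∉ A. Then |A|^3 ≤ |A·A| · |A|^2 · |A+A| / p + |A| · ( p · |A·A| · |A+A| )^{1/2}. -/

import Mathlib

open Pointwise Finset Complex

namespace GaraevKeyIneq

variable {p : ℕ} [hp : Fact p.Prime]

noncomputable def ee : AddChar (ZMod p) ℂ := ZMod.stdAddChar

lemma orth (x : ZMod p) : ∑ ψ : ZMod p, ee (ψ * x) = if x = 0 then (p:ℂ) else 0 := by
  have := AddChar.sum_mulShift (ψ := (ee : AddChar (ZMod p) ℂ)) x (ZMod.isPrimitive_stdAddChar p)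
  simpa [ZMod.card] using this

lemma norm_ee (a : ZMod p) : ‖(ee a : ℂ)‖ = 1 := by
  rw [ee, ZMod.stdAddChar_apply, Circle.norm_coe]

lemma conj_ee (a : ZMod p) : (starRingEnd ℂ) (ee a) = ee (-a) := by
  have h1 : ‖(ee a : ℂ)‖ = 1 := norm_ee a
  rw [← Complex.inv_eq_conj h1, ← AddChar.map_neg_eq_inv]

noncomputable def FT (X : Finset (ZMod p)) (ψ : ZMod p) : ℂ := ∑ x ∈ X, ee (ψ * x)

lemma FT_zero (X : Finset (ZMod p)) : FT X 0 = (X.card : ℂ) := by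
  simp [FT]

lemma norm_FT_le (X : Finset (ZMod p)) (ψ : ZMod p) : ‖FT X ψ‖ ≤ X.card := by
  refine (norm_sum_le _ _).trans ?_
  simp [norm_ee]

lemma parseval (X : Finset (ZMod p)) : ∑ ψ : ZMod p, ‖FT X ψ‖ ^ 2 = p * X.card := by
  have key : ∑ ψ : ZMod p, (FT X ψ * (starRingEnd ℂ) (FT X ψ)) = (p : ℂ) * X.card := by
    have h1 : ∀ ψ : ZMod p, FT X ψ * (starRingEnd ℂ) (FT X ψ)
        = ∑ x ∈ X, ∑ y ∈ X, ee (ψ * (x - y)) := by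
      intro ψ
      rw [FT, map_sum, Finset.sum_mul_sum]
      refine Finset.sum_congr rfl fun x hx => Finset.sum_congr rfl fun y hy => ?_
      rw [conj_ee, ← AddChar.map_add_eq_mul]
      congr 1
      ring
    simp_rw [h1]
    rw [Finset.sum_comm]
    have h2 : ∀ x ∈ X, ∑ ψ : ZMod p, ∑ y ∈ X, ee (ψ * (x - y)) = (p : ℂ) := by
      intro x hx
      rw [Finset.sum_comm]
      have h3 : ∀ y ∈ X, ∑ ψ : ZMod p, ee (ψ * (x - y)) = if x = y then (p:ℂ) else 0 := by
        intro y hy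
        rw [orth]
        simp [sub_eq_zero]
      rw [Finset.sum_congr rfl h3, Finset.sum_ite_eq X x (fun _ => (p:ℂ))]
      simp [hx]
    rw [Finset.sum_congr rfl h2, Finset.sum_const, nsmul_eq_mul, mul_comm]
  have h4 : ∀ ψ : ZMod p, FT X ψ * (starRingEnd ℂ) (FT X ψ) = ((‖FT X ψ‖ ^ 2 : ℝ) : ℂ) := by
    intro ψ
    rw [Complex.mul_conj']
    norm_cast
  rw [Finset.sum_congr rfl (fun ψ _ => h4 ψ)] at key
  rw [← Complex.ofReal_sum] at key
  exact_mod_cast key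

lemma expand (A Sf Tf : Finset (ZMod p)) (ψ b : ZMod p) :
    FT Sf ψ * (FT A (ψ*b) * FT Tf (-(ψ*b)))
      = ∑ s ∈ Sf, ∑ c ∈ A, ∑ t ∈ Tf, ee (ψ*(s - b*(t-c))) := by
  rw [FT, FT, FT, Finset.sum_mul]
  refine Finset.sum_congr rfl fun s hs => ?_
  rw [Finset.sum_mul_sum, Finset.mul_sum]
  refine Finset.sum_congr rfl fun c hc => ?_
  rw [Finset.mul_sum]
  refine Finset.sum_congr rfl fun t ht => ?_
  rw [← AddChar.map_add_eq_mul, ← AddChar.map_add_eq_mul]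
  congr 1
  ring

lemma count_id (A Sf Tf : Finset (ZMod p)) :
    ∑ ψ : ZMod p, FT Sf ψ * ∑ b ∈ A, FT A (ψ*b) * FT Tf (-(ψ*b))
    = (p:ℂ) * ((((A ×ˢ A) ×ˢ (Sf ×ˢ Tf)).filter
        (fun q => q.2.1 = q.1.1 * (q.2.2 - q.1.2))).card : ℂ) := by
  have lhs1 : ∑ ψ : ZMod p, FT Sf ψ * ∑ b ∈ A, FT A (ψ*b) * FT Tf (-(ψ*b))
      = ∑ ψ : ZMod p, ∑ b ∈ A, ∑ s ∈ Sf, ∑ c ∈ A, ∑ t ∈ Tf, ee (ψ*(s - b*(t-c))) := by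
    refine Finset.sum_congr rfl fun ψ _ => ?_
    rw [Finset.mul_sum]
    exact Finset.sum_congr rfl fun b _ => expand A Sf Tf ψ b
  rw [lhs1]
  rw [Finset.sum_comm]
  conv_lhs => enter [2, b]; rw [Finset.sum_comm]
  conv_lhs => enter [2, b, 2, s]; rw [Finset.sum_comm]
  conv_lhs => enter [2, b, 2, s, 2, c]; rw [Finset.sum_comm]
  simp_rw [orth]
  conv_lhs => enter [2, b]; rw [Finset.sum_comm]
  simp_rw [sub_eq_zero]
  rw [mul_comm]
  rw [Finset.card_filter]
  push_cast
  rw [Finset.sum_mul]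
  simp only [Finset.sum_product]
  refine Finset.sum_congr rfl fun b _ => Finset.sum_congr rfl fun c _ =>
    Finset.sum_congr rfl fun s _ => Finset.sum_congr rfl fun t _ => ?_
  simp [ite_mul]

lemma err_reindex (A Sf Tf : Finset (ZMod p)) (h0 : (0:ZMod p) ∉ A) :
    ∑ ψ ∈ Finset.univ.erase (0 : ZMod p), FT Sf ψ * ∑ b ∈ A, FT A (ψ*b) * FT Tf (-(ψ*b))
    = ∑ φ ∈ Finset.univ.erase (0 : ZMod p),
        (∑ b ∈ A, FT Sf (φ*b⁻¹)) * (FT A φ * FT Tf (-φ)) := by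
  simp_rw [Finset.mul_sum]
  rw [Finset.sum_comm]
  conv_rhs => enter [2, φ]; rw [Finset.sum_mul]
  conv_rhs => rw [Finset.sum_comm]
  refine Finset.sum_congr rfl fun b hb => ?_
  have hbne : b ≠ 0 := fun h => h0 (h ▸ hb)
  refine Finset.sum_nbij' (fun ψ => ψ * b) (fun φ => φ * b⁻¹) ?_ ?_ ?_ ?_ ?_
  · intro ψ hψ
    simp only [Finset.mem_erase, Finset.mem_univ, and_true] at *
    exact mul_ne_zero hψ hbne
  · intro φ hφ
    simp only [Finset.mem_erase, Finset.mem_univ, and_true] at *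
    exact mul_ne_zero hφ (inv_ne_zero hbne)
  · intro ψ _; field_simp
  · intro φ _; field_simp
  · intro ψ _
    have h1 : ψ * b * b⁻¹ = ψ := by field_simp
    rw [h1]

lemma L1 (A Sf : Finset (ZMod p)) (h0 : (0:ZMod p) ∉ A) (φ : ZMod p) (hφ : φ ≠ 0) :
    ∑ b ∈ A, ‖FT Sf (φ * b⁻¹)‖ ≤ Real.sqrt ((A.card : ℝ) * ((p : ℝ) * Sf.card)) := by
  have h2 : ∑ b ∈ A, ‖FT Sf (φ*b⁻¹)‖^2 ≤ (p : ℝ) * Sf.card := by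
    rw [← parseval Sf]
    have him : ∑ b ∈ A, ‖FT Sf (φ*b⁻¹)‖^2
        = ∑ x ∈ A.image (fun b => φ*b⁻¹), ‖FT Sf x‖^2 := by
      rw [Finset.sum_image]
      intro b hb c hc h
      have hbne : b ≠ 0 := fun hh => h0 (hh ▸ hb)
      have hcne : c ≠ 0 := fun hh => h0 (hh ▸ hc)
      have h' := mul_left_cancel₀ hφ h
      exact inv_injective h'
    rw [him]
    exact Finset.sum_le_sum_of_subset_of_nonneg (Finset.subset_univ _)
      (fun _ _ _ => sq_nonneg _)
  have cs : (∑ b ∈ A, ‖FT Sf (φ*b⁻¹)‖)^2 ≤ (A.card : ℝ) * ∑ b ∈ A, ‖FT Sf (φ*b⁻¹)‖^2 := by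
    have := Finset.sum_mul_sq_le_sq_mul_sq A (fun _ => (1:ℝ)) (fun b => ‖FT Sf (φ*b⁻¹)‖)
    simpa using this
  have hnn : (0:ℝ) ≤ ∑ b ∈ A, ‖FT Sf (φ*b⁻¹)‖ := Finset.sum_nonneg fun _ _ => norm_nonneg _
  rw [Real.le_sqrt hnn (by positivity)]
  calc (∑ b ∈ A, ‖FT Sf (φ*b⁻¹)‖)^2 ≤ (A.card : ℝ) * ∑ b ∈ A, ‖FT Sf (φ*b⁻¹)‖^2 := cs
    _ ≤ (A.card : ℝ) * ((p:ℝ) * Sf.card) := by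
        exact mul_le_mul_of_nonneg_left h2 (Nat.cast_nonneg _)

lemma L2 (A Tf : Finset (ZMod p)) :
    ∑ φ ∈ Finset.univ.erase (0 : ZMod p), ‖FT A φ‖ * ‖FT Tf (-φ)‖
      ≤ Real.sqrt ((p:ℝ) * A.card) * Real.sqrt ((p:ℝ) * Tf.card) := by
  have step1 : ∑ φ ∈ Finset.univ.erase (0 : ZMod p), ‖FT A φ‖ * ‖FT Tf (-φ)‖
      ≤ ∑ φ : ZMod p, ‖FT A φ‖ * ‖FT Tf (-φ)‖ :=
    Finset.sum_le_sum_of_subset_of_nonneg (Finset.subset_univ _)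
      (fun _ _ _ => mul_nonneg (norm_nonneg _) (norm_nonneg _))
  have hTneg : ∑ φ : ZMod p, ‖FT Tf (-φ)‖^2 = ∑ ψ : ZMod p, ‖FT Tf ψ‖^2 := by
    exact Fintype.sum_equiv (Equiv.neg _) _ _ (by intro x; simp)
  have cs : (∑ φ : ZMod p, ‖FT A φ‖ * ‖FT Tf (-φ)‖)^2
      ≤ (∑ φ : ZMod p, ‖FT A φ‖^2) * ∑ φ : ZMod p, ‖FT Tf (-φ)‖^2 :=
    Finset.sum_mul_sq_le_sq_mul_sq _ _ _
  rw [hTneg, parseval, parseval] at cs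
  have hnn : (0:ℝ) ≤ ∑ φ : ZMod p, ‖FT A φ‖ * ‖FT Tf (-φ)‖ :=
    Finset.sum_nonneg fun _ _ => mul_nonneg (norm_nonneg _) (norm_nonneg _)
  refine step1.trans ?_
  rw [← Real.sqrt_mul (by positivity)]
  rw [Real.le_sqrt hnn (by positivity)]
  exact cs

end GaraevKeyIneq

open GaraevKeyIneq in
theorem key_inequality_prime (p : ℕ) (hp : p.Prime) (A : Finset (ZMod p))
    (hA : A.Nonempty) (h0 : (0 : ZMod p) ∉ A) :
    (A.card : ℝ) ^ 3 ≤
      ((A * A).card : ℝ) * (A.card : ℝ) ^ 2 * ((A + A).card : ℝ) / p +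
        (A.card : ℝ) * Real.sqrt ((p : ℝ) * (A * A).card * (A + A).card) := by
  haveI : Fact p.Prime := ⟨hp⟩
  classical
  set S := A * A with hS
  set T := A + A with hT
  set Q := (((A ×ˢ A) ×ˢ (S ×ˢ T)).filter
      (fun q => q.2.1 = q.1.1 * (q.2.2 - q.1.2))) with hQdef
  -- Step 1 : |A|^3 ≤ |Q|
  have hQ1 : A.card ^ 3 ≤ Q.card := by
    have hcard : ((A ×ˢ A) ×ˢ A).card = A.card ^ 3 := by
      simp [Finset.card_product]; ring
    rw [← hcard]
    apply Finset.card_le_card_of_injOn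
      (fun q => ((q.1.1, q.1.2), (q.2 * q.1.1, q.2 + q.1.2)))
    · intro q hq
      simp only [Finset.mem_coe, Finset.mem_product] at hq
      obtain ⟨⟨hb, hc⟩, ha⟩ := hq
      rw [hQdef]
      simp only [Finset.mem_coe, Finset.mem_filter, Finset.mem_product]
      refine ⟨⟨⟨hb, hc⟩, Finset.mul_mem_mul ha hb, Finset.add_mem_add ha hc⟩, ?_⟩
      ring
    · intro q1 h1 q2 h2 heq
      obtain ⟨⟨b1, c1⟩, a1⟩ := q1
      obtain ⟨⟨b2, c2⟩, a2⟩ := q2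
      simp only [Prod.mk.injEq] at heq
      obtain ⟨⟨hb, hc⟩, -, hac⟩ := heq
      have : a1 = a2 := by
        have := hac
        rw [hc] at this
        exact add_right_cancel this
      simp [hb, hc, this]
  -- Counting identity and splitting at ψ = 0
  have hcount := count_id (p := p) A S T
  have hsplit : ∑ ψ : ZMod p, FT S ψ * ∑ b ∈ A, FT A (ψ*b) * FT T (-(ψ*b))
      = (S.card : ℂ) * ((A.card : ℂ) * ((A.card : ℂ) * (T.card : ℂ)))
        + ∑ ψ ∈ Finset.univ.erase (0:ZMod p),
            FT S ψ * ∑ b ∈ A, FT A (ψ*b) * FT T (-(ψ*b)) := by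
    rw [← Finset.add_sum_erase _ _ (Finset.mem_univ (0 : ZMod p))]
    congr 1
    simp [FT_zero, Finset.sum_const, nsmul_eq_mul, mul_comm, mul_assoc, mul_left_comm]
  -- Error bound
  have herr : ‖∑ ψ ∈ Finset.univ.erase (0:ZMod p),
        FT S ψ * ∑ b ∈ A, FT A (ψ*b) * FT T (-(ψ*b))‖
      ≤ Real.sqrt ((A.card : ℝ) * ((p:ℝ) * S.card))
          * (Real.sqrt ((p:ℝ) * A.card) * Real.sqrt ((p:ℝ) * T.card)) := by
    rw [err_reindex A S T h0]
    refine (norm_sum_le _ _).trans ?_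
    have hb : ∀ φ ∈ Finset.univ.erase (0:ZMod p),
        ‖(∑ b ∈ A, FT S (φ*b⁻¹)) * (FT A φ * FT T (-φ))‖
          ≤ Real.sqrt ((A.card : ℝ) * ((p:ℝ) * S.card)) * (‖FT A φ‖ * ‖FT T (-φ)‖) := by
      intro φ hφ
      rw [norm_mul, norm_mul]
      have hφ0 : φ ≠ 0 := (Finset.mem_erase.mp hφ).1
      exact mul_le_mul_of_nonneg_right
        ((norm_sum_le _ _).trans (L1 A S h0 φ hφ0)) (by positivity)
    refine (Finset.sum_le_sum hb).trans ?_
    rw [← Finset.mul_sum]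
    exact mul_le_mul_of_nonneg_left (L2 A T) (Real.sqrt_nonneg _)
  -- Combine into a real inequality
  have hmain : (p:ℝ) * Q.card ≤ (S.card:ℝ) * (A.card:ℝ)^2 * (T.card:ℝ)
      + Real.sqrt ((A.card : ℝ) * ((p:ℝ) * S.card))
          * (Real.sqrt ((p:ℝ) * A.card) * Real.sqrt ((p:ℝ) * T.card)) := by
    have h5 : ((p:ℝ) * (Q.card:ℝ)) = ‖((p:ℂ) * (Q.card:ℂ))‖ := by
      rw [norm_mul]
      simp
    rw [h5, ← hcount, hsplit]
    refine (norm_add_le _ _).trans ?_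
    have h6 : ‖(S.card : ℂ) * ((A.card : ℂ) * ((A.card : ℂ) * (T.card : ℂ)))‖
        = (S.card:ℝ) * (A.card:ℝ)^2 * (T.card:ℝ) := by
      simp [norm_mul]
      ring
    rw [h6]
    exact (add_le_add_iff_left _).mpr herr
  -- sqrt algebra
  have hpr : (0:ℝ) < p := by exact_mod_cast hp.pos
  have hsqrt : Real.sqrt ((A.card : ℝ) * ((p:ℝ) * S.card))
      * (Real.sqrt ((p:ℝ) * A.card) * Real.sqrt ((p:ℝ) * T.card))
      = (p:ℝ) * ((A.card:ℝ) * Real.sqrt ((p:ℝ) * S.card * T.card)) := by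
    rw [← Real.sqrt_mul (by positivity), ← Real.sqrt_mul (by positivity)]
    have : (A.card : ℝ) * ((p:ℝ) * S.card) * ((p:ℝ) * A.card * ((p:ℝ) * T.card))
        = ((p:ℝ) * A.card)^2 * ((p:ℝ) * S.card * T.card) := by ring
    rw [this, Real.sqrt_mul (sq_nonneg _), Real.sqrt_sq (by positivity)]
    ring
  rw [hsqrt] at hmain
  have hA3 : ((A.card:ℝ))^3 ≤ (Q.card : ℝ) := by exact_mod_cast hQ1
  have h7 : (p:ℝ) * (A.card:ℝ)^3 ≤ (S.card:ℝ) * (A.card:ℝ)^2 * (T.card:ℝ)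
      + (p:ℝ) * ((A.card:ℝ) * Real.sqrt ((p:ℝ) * S.card * T.card)) :=
    le_trans (by nlinarith) hmain
  have h8 : (S.card:ℝ) * (A.card:ℝ)^2 * (T.card:ℝ) / p
        + (A.card:ℝ) * Real.sqrt ((p:ℝ) * S.card * T.card)
      = ((S.card:ℝ) * (A.card:ℝ)^2 * (T.card:ℝ)
        + (p:ℝ) * ((A.card:ℝ) * Real.sqrt ((p:ℝ) * S.card * T.card))) / p := by
    field_simp
  rw [h8, le_div_iff₀ hpr]
  linarith [h7]
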